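/- For each natural number l ≥ 0 define S_l = ∑_{i=0}^{∞} 2^{−i} · ∏_{j=i+1}^{i+l} (1 − 2^{−j}) (so S_0 = ∑_{i=0}^{∞} 2^{−i} = 2, the product being empty when l = 0). Then for every l ≥ 1, S_l = S_{l−1} − 2^l / ((2^l − 1)(2^{l+1} − 1)); in particular all these series converge. -/

import Mathlib

/-!
Write `P i = ∏_{j<m+1} (1 - q^(i+j))`. Each term `q^i ∏_{j=i+1}^{i+m} (1 - q^j)` equals
`(P (i+1) - P i) / (1 - q^(m+1))`, while `P 0 = 0` and `P i → 1` for `0 ≤ q < 1`, so the series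
telescopes to `1 / (1 - q^(m+1))`. At `q = 1/2` this is `S m = 2^(m+1) / (2^(m+1) - 1)`, and the
recurrence is an identity between these closed forms.
-/

/-- `S_l = ∑_{i=0}^{∞} 2^{−i} · ∏_{j=i+1}^{i+l} (1 − 2^{−j})` (the product is empty,
hence `1`, when `l = 0`, so `S_0 = ∑_{i=0}^{∞} 2^{−i} = 2`). -/
noncomputable def S (l : ℕ) : ℝ :=
  ∑' i : ℕ, (2 : ℝ) ^ (-(i : ℤ)) *
    ∏ j ∈ Finset.Icc (i + 1) (i + l), (1 - (2 : ℝ) ^ (-(j : ℤ)))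

open Finset Filter Topology

theorem pow_mul_prod_mul_one_sub_pow {R : Type*} [CommRing R] (q : R) (m i : ℕ) :
    q ^ i * (∏ j ∈ range m, (1 - q ^ (i + 1 + j))) * (1 - q ^ (m + 1)) =
      ∏ j ∈ range (m + 1), (1 - q ^ (i + 1 + j)) - ∏ j ∈ range (m + 1), (1 - q ^ (i + j)) := by
  rw [prod_range_succ, prod_range_succ']
  simp only [add_assoc, add_comm 1, add_zero, pow_add]
  ring

theorem hasSum_pow_mul_prod_one_sub_pow {q : ℝ} (h0 : 0 ≤ q) (h1 : q < 1) (m : ℕ) :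
    HasSum (fun i => q ^ i * ∏ j ∈ range m, (1 - q ^ (i + 1 + j))) (1 - q ^ (m + 1))⁻¹ := by
  have hq : 1 - q ^ (m + 1) ≠ 0 := (sub_pos.2 (pow_lt_one₀ h0 h1 m.succ_ne_zero)).ne'
  set P : ℕ → ℝ := fun i => ∏ j ∈ range (m + 1), (1 - q ^ (i + j))
  have partial_sum (n : ℕ) :
      ∑ i ∈ range n, q ^ i * ∏ j ∈ range m, (1 - q ^ (i + 1 + j)) = P n / (1 - q ^ (m + 1)) := by
    have hP0 : P 0 = 0 := prod_eq_zero (mem_range.2 m.succ_pos) (by simp)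
    rw [eq_div_iff hq, sum_mul, ← sub_zero (P n), ← hP0, ← sum_range_sub]
    refine sum_congr rfl fun i _ => ?_
    rw [pow_mul_prod_mul_one_sub_pow]
  have hP_lim : Tendsto P atTop (𝓝 1) := by
    rw [← prod_const_one (s := range (m + 1))]
    refine tendsto_finsetProd _ fun j _ => ?_
    simpa using tendsto_const_nhds.sub
      ((tendsto_pow_atTop_nhds_zero_of_lt_one h0 h1).comp (tendsto_add_atTop_nat j))
  have hterm_nonneg (i : ℕ) : 0 ≤ q ^ i * ∏ j ∈ range m, (1 - q ^ (i + 1 + j)) :=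
    mul_nonneg (pow_nonneg h0 i) (prod_nonneg fun j _ =>
      sub_nonneg.2 (pow_le_one₀ h0 h1.le))
  rw [hasSum_iff_tendsto_nat_of_nonneg hterm_nonneg, funext partial_sum, ← one_div]
  exact hP_lim.div_const _

theorem S_term_eq (m i : ℕ) :
    (2 : ℝ) ^ (-(i : ℤ)) * ∏ j ∈ Icc (i + 1) (i + m), (1 - (2 : ℝ) ^ (-(j : ℤ))) =
      2⁻¹ ^ i * ∏ j ∈ range m, (1 - 2⁻¹ ^ (i + 1 + j)) := by
  rw [← Ico_add_one_right_eq_Icc, prod_Ico_eq_prod_range, add_right_comm, Nat.add_sub_cancel_left]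
  simp only [zpow_neg, zpow_natCast, inv_pow]

theorem hasSum_S_term (m : ℕ) :
    HasSum (fun i : ℕ => (2 : ℝ) ^ (-(i : ℤ)) *
        ∏ j ∈ Icc (i + 1) (i + m), (1 - (2 : ℝ) ^ (-(j : ℤ)))) (1 - 2⁻¹ ^ (m + 1))⁻¹ := by
  simpa only [S_term_eq] using hasSum_pow_mul_prod_one_sub_pow (by norm_num) (by norm_num) m

theorem S_eq (m : ℕ) : S m = (1 - 2⁻¹ ^ (m + 1))⁻¹ := (hasSum_S_term m).tsum_eq

/-- For every `l ≥ 1`, `S_l = S_{l−1} − 2^l / ((2^l − 1)(2^{l+1} − 1))`; in particular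
all the series defining the `S_m` converge. -/
theorem S_recurrence (l : ℕ) (hl : 1 ≤ l) :
    (∀ m : ℕ, Summable (fun i : ℕ => (2 : ℝ) ^ (-(i : ℤ)) *
        ∏ j ∈ Finset.Icc (i + 1) (i + m), (1 - (2 : ℝ) ^ (-(j : ℤ))))) ∧
      S l = S (l - 1) - (2 : ℝ) ^ l / (((2 : ℝ) ^ l - 1) * ((2 : ℝ) ^ (l + 1) - 1)) := by
  refine ⟨fun m => (hasSum_S_term m).summable, ?_⟩
  obtain ⟨m, rfl⟩ : ∃ m, l = m + 1 := ⟨l - 1, by omega⟩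
  have h1 : (2 : ℝ) ^ (m + 1) - 1 ≠ 0 := (sub_pos.2 (one_lt_pow₀ one_lt_two m.succ_ne_zero)).ne'
  have h2 : (2 : ℝ) ^ (m + 2) - 1 ≠ 0 := (sub_pos.2 (one_lt_pow₀ one_lt_two (by omega))).ne'
  rw [Nat.add_sub_cancel, S_eq, S_eq, inv_pow, inv_pow]
  field_simp
  ring
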